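/- Let Ω = (−1,1)³, P = {0} × (−1,1)², and define y : Ω → ℝ³ by y(x₁,x₂,x₃) := (x₁, x₂, |x₁| x₃). Then: y ∈ W^{1,∞}(Ω;ℝ³); det ∇y(x) = |x₁| > 0 for every x ∈ Ω \ P; y restricted to Ω \ P is injective; y(Ω) = V⁺ ∪ S ∪ V⁻ is not open, where V⁺ = {ξ : 0 < ξ₁ < 1, −1 < ξ₂ < 1, |ξ₃| < ξ₁}, S = {0} × (−1,1) × {0}, and V⁻ = {ξ : −1 < ξ₁ < 0, −1 < ξ₂ < 1, |ξ₃| < −ξ₁}; and the deformed configuration Ω^y := y(Ω) \ y(∂Ω) equals V⁺ ∪ V⁻, which is open and disconnected. -/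

import Mathlib

noncomputable section
open MeasureTheory Set Filter Topology

/-- We model `ℝ³` as `Fin 3 → ℝ` (with Lebesgue measure `volume`). -/
abbrev V3 := Fin 3 → ℝ
/-- 3×3 real matrices. -/
abbrev M3 := Matrix (Fin 3) (Fin 3) ℝ

/-- Euclidean norm of a vector in `ℝ³`. -/
def vnorm (v : V3) : ℝ := Real.sqrt (∑ i, (v i) ^ 2)

/-- Frobenius norm of a matrix. -/
def mnorm (A : M3) : ℝ := Real.sqrt (∑ i, ∑ j, (A i j) ^ 2)

/-- The (a.e.-defined) gradient matrix of `y : ℝ³ → ℝ³`, `(∇y)_{ij} = ∂_j y_i`. -/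
def gradM (y : V3 → V3) (x : V3) : M3 := Matrix.of fun i j => fderiv ℝ y x (Pi.single j 1) i

/-- Jacobian determinant `det ∇y`. -/
def detG (y : V3 → V3) (x : V3) : ℝ := (gradM y x).det

/-- Cofactor matrix `cof A` (transpose of the adjugate). -/
def cofM (A : M3) : M3 := Matrix.transpose (Matrix.adjugate A)

/-- `adj A`, the transpose of the cofactor matrix (the classical adjugate). -/
def adjM (A : M3) : M3 := Matrix.adjugate A

/-- Gradient (as a vector) of a scalar function on `ℝ³`. -/
def gradS (φ : V3 → ℝ) (ξ : V3) : V3 := fun j => fderiv ℝ φ ξ (Pi.single j 1)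

/-- Divergence of a vector field on `ℝ³`. -/
def divV (ψ : V3 → V3) (ξ : V3) : ℝ := ∑ i, fderiv ℝ ψ ξ (Pi.single i 1) i

/-- The deformed configuration `Ω^y := y(Ω) \ y(∂Ω)`. -/
def defConfig (y : V3 → V3) (Ω : Set V3) : Set V3 := y '' Ω \ y '' frontier Ω

/-- `y` is almost everywhere injective on `Ω`: injective off a Lebesgue-null set. -/
def AEInjOn (y : V3 → V3) (Ω : Set V3) : Prop :=
  ∃ X ⊆ Ω, volume X = 0 ∧ Set.InjOn y (Ω \ X)

/-- Membership in `W^{1,p}(Ω;ℝ³)` (`p > 3`), identified with the continuous representative: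
continuity up to the boundary, a.e. differentiability, and `L^p`-integrability of the
gradient. -/
def W1p (y : V3 → V3) (Ω : Set V3) (p : ℝ) : Prop :=
  ContinuousOn y (closure Ω) ∧
  (∀ᵐ x ∂volume.restrict Ω, DifferentiableAt ℝ y x) ∧
  (∫⁻ x in Ω, ENNReal.ofReal (mnorm (gradM y x) ^ p)) < ⊤

/-- Lusin property (N) on a set `s`: null sets are mapped to null sets. -/
def LusinN (y : V3 → V3) (s : Set V3) : Prop :=
  ∀ A ⊆ s, volume A = 0 → volume (y '' A) = 0

/-- The cube `Ω = (−1,1)³`. -/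
def Ω19 : Set V3 := {x | ∀ i, x i ∈ Ioo (-1 : ℝ) 1}

/-- The middle plane `P = {0} × (−1,1)²`. -/
def P19 : Set V3 := {x | x 0 = 0 ∧ x 1 ∈ Ioo (-1 : ℝ) 1 ∧ x 2 ∈ Ioo (-1 : ℝ) 1}

/-- Ball's deformation `y(x) = (x₁, x₂, |x₁| x₃)`. -/
def y19 : V3 → V3 := fun x => ![x 0, x 1, |x 0| * x 2]

def V19plus : Set V3 :=
  {ξ | 0 < ξ 0 ∧ ξ 0 < 1 ∧ -1 < ξ 1 ∧ ξ 1 < 1 ∧ |ξ 2| < ξ 0}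

def S19 : Set V3 := {ξ | ξ 0 = 0 ∧ ξ 1 ∈ Ioo (-1 : ℝ) 1 ∧ ξ 2 = 0}

def V19minus : Set V3 :=
  {ξ | -1 < ξ 0 ∧ ξ 0 < 0 ∧ -1 < ξ 1 ∧ ξ 1 < 1 ∧ |ξ 2| < -ξ 0}

/-!
Off the plane `x₁ = 0` the map is injective, with Jacobian determinant `|x₁|`, and carries the
two half-cubes onto the pyramids `V⁺` and `V⁻`, inverted by `ξ ↦ (ξ₁, ξ₂, ξ₃ / |ξ₁|)`; the plane
`P` collapses onto the segment `S`. No point `(0, 0, t)` with `t ≠ 0` is attained, so `y(Ω)` is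
not open at `0 ∈ S`. The segment is also the image of the boundary points `(0, x₂, 1)`, so `Ω^y`
keeps only the two pyramids, which the hyperplane `ξ₁ = 0` separates.
-/

open scoped NNReal

lemma lipschitzOnWith_pi {α ι : Type*} [PseudoEMetricSpace α] [Fintype ι] {β : ι → Type*}
    [∀ i, PseudoEMetricSpace (β i)] {K : ℝ≥0} {s : Set α} {f : α → ∀ i, β i}
    (hf : ∀ i, LipschitzOnWith K (fun x => f x i) s) : LipschitzOnWith K f s :=
  fun _ hx _ hy => edist_pi_le_iff.2 fun i => hf i hx hy

lemma LipschitzOnWith.mul_of_abs_le {α : Type*} [PseudoMetricSpace α] {s : Set α}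
    {f g : α → ℝ} {Kf Kg Mf Mg : ℝ≥0} (hf : LipschitzOnWith Kf f s)
    (hg : LipschitzOnWith Kg g s) (hfM : ∀ x ∈ s, |f x| ≤ Mf) (hgM : ∀ x ∈ s, |g x| ≤ Mg) :
    LipschitzOnWith (Mf * Kg + Kf * Mg) (fun x => f x * g x) s := by
  refine LipschitzOnWith.of_dist_le_mul fun x hx y hy => ?_
  have hfxy := hf.dist_le_mul x hx y hy
  have hgxy := hg.dist_le_mul x hx y hy
  rw [Real.dist_eq] at hfxy hgxy ⊢
  calc |f x * g x - f y * g y| = |f x * (g x - g y) + (f x - f y) * g y| := by ring_nf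
    _ ≤ |f x| * |g x - g y| + |f x - f y| * |g y| := by
      rw [← abs_mul, ← abs_mul]; exact abs_add_le _ _
    _ ≤ Mf * (Kg * dist x y) + Kf * dist x y * Mg := by
      gcongr
      exacts [hfM x hx, hgM y hy]
    _ = ↑(Mf * Kg + Kf * Mg) * dist x y := by push_cast; ring

@[simp] lemma y19_apply_zero (x : V3) : y19 x 0 = x 0 := rfl
@[simp] lemma y19_apply_one (x : V3) : y19 x 1 = x 1 := rfl
@[simp] lemma y19_apply_two (x : V3) : y19 x 2 = |x 0| * x 2 := rfl

lemma mem_Ω19_iff {x : V3} : x ∈ Ω19 ↔ |x 0| < 1 ∧ |x 1| < 1 ∧ |x 2| < 1 := by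
  simp [Ω19, Fin.forall_fin_succ, abs_lt]

lemma Ω19_eq_pi : Ω19 = univ.pi fun _ => Ioo (-1 : ℝ) 1 := by
  ext x; simp [Ω19]

lemma isOpen_Ω19 : IsOpen Ω19 := by
  rw [Ω19_eq_pi]
  exact isOpen_set_pi finite_univ fun _ _ => isOpen_Ioo

lemma closure_Ω19 : closure Ω19 = univ.pi fun _ => Icc (-1 : ℝ) 1 := by
  rw [Ω19_eq_pi, closure_pi_set]
  exact pi_congr rfl fun _ _ => closure_Ioo (by norm_num)

lemma lipschitzOnWith_y19 : LipschitzOnWith 2 y19 Ω19 := by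
  have hcoord (i : Fin 3) : LipschitzOnWith 1 (fun x : V3 => x i) Ω19 :=
    (LipschitzWith.eval i).lipschitzOnWith
  have habs : LipschitzOnWith 1 (fun x : V3 => |x 0|) Ω19 := by
    simpa [Function.comp_def] using ((lipschitzWith_one_norm (E := ℝ)).comp
      (LipschitzWith.eval (α := fun _ : Fin 3 => ℝ) 0)).lipschitzOnWith
  have hbound (i : Fin 3) : ∀ x ∈ Ω19, |x i| ≤ 1 := fun x hx =>
    abs_le.2 ⟨(hx i).1.le, (hx i).2.le⟩
  refine lipschitzOnWith_pi fun i => ?_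
  fin_cases i
  · exact (hcoord 0).weaken one_le_two
  · exact (hcoord 1).weaken one_le_two
  · simpa [one_add_one_eq_two] using habs.mul_of_abs_le (hcoord 2) (Mf := 1) (Mg := 1)
      (by simpa using hbound 0) (hbound 2)

open ContinuousLinearMap in
lemma hasFDerivAt_y19 {x : V3} (hx : x 0 ≠ 0) :
    HasFDerivAt y19 (pi ![(proj 0 : V3 →L[ℝ] ℝ), proj 1,
      |x 0| • proj 2 + (SignType.sign (x 0) * x 2 : ℝ) • proj 0]) x := by
  rw [hasFDerivAt_pi']
  intro i
  fin_cases i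
  · exact hasFDerivAt_apply 0 x
  · exact hasFDerivAt_apply 1 x
  · refine (((hasDerivAt_abs hx).comp_hasFDerivAt x (hasFDerivAt_apply 0 x)).mul
      (hasFDerivAt_apply (𝕜 := ℝ) 2 x)).congr_fderiv ?_
    ext v
    simp
    ring

lemma detG_y19 {x : V3} (hx : x 0 ≠ 0) : detG y19 x = |x 0| := by
  simp [detG, gradM, (hasFDerivAt_y19 hx).fderiv, Matrix.det_fin_three]

lemma Ω19_diff_P19_subset : Ω19 \ P19 ⊆ {x | x 0 ≠ 0} :=
  fun _ ⟨hΩ, hP⟩ h0 => hP ⟨h0, hΩ 1, hΩ 2⟩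

lemma injOn_y19 : InjOn y19 {x | x 0 ≠ 0} := by
  rintro a ha b - hab
  have h0 : a 0 = b 0 := congrFun hab 0
  have h2 : |a 0| * a 2 = |b 0| * b 2 := congrFun hab 2
  rw [h0] at h2
  ext i
  fin_cases i
  · exact h0
  · exact congrFun hab 1
  · exact mul_left_cancel₀ (abs_ne_zero.2 (h0 ▸ ha)) h2

lemma mem_V19plus_union_V19minus_iff {ξ : V3} :
    ξ ∈ V19plus ∪ V19minus ↔ ξ 0 ≠ 0 ∧ |ξ 0| < 1 ∧ |ξ 1| < 1 ∧ |ξ 2| < |ξ 0| := by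
  rcases lt_trichotomy (ξ 0) 0 with h | h | h
  · simp [V19plus, V19minus, h, h.not_gt, h.ne, abs_of_neg h, abs_lt, neg_lt, and_assoc]
  · simp [V19plus, V19minus, h]
  · simp [V19plus, V19minus, h, h.not_gt, h.ne', abs_of_pos h, abs_lt, and_assoc]

lemma y19_mem_V19plus_union_V19minus_iff {x : V3} :
    y19 x ∈ V19plus ∪ V19minus ↔ x 0 ≠ 0 ∧ x ∈ Ω19 := by
  rw [mem_V19plus_union_V19minus_iff, mem_Ω19_iff]
  simp only [y19_apply_zero, y19_apply_one, y19_apply_two, abs_mul, abs_abs]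
  constructor
  · rintro ⟨h0, h0', h1, h2⟩
    exact ⟨h0, h0', h1, (mul_lt_iff_lt_one_right (abs_pos.2 h0)).1 h2⟩
  · rintro ⟨h0, h0', h1, h2⟩
    exact ⟨h0, h0', h1, (mul_lt_iff_lt_one_right (abs_pos.2 h0)).2 h2⟩

lemma y19_div_abs {ξ : V3} (h : ξ 0 ≠ 0) : y19 ![ξ 0, ξ 1, ξ 2 / |ξ 0|] = ξ := by
  ext i
  fin_cases i <;> simp [mul_div_cancel₀ _ (abs_ne_zero.2 h)]

lemma V19plus_union_V19minus_subset_image : V19plus ∪ V19minus ⊆ y19 '' Ω19 := by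
  intro ξ hξ
  have h0 := (mem_V19plus_union_V19minus_iff.1 hξ).1
  rw [← y19_div_abs h0] at hξ ⊢
  exact mem_image_of_mem _ (y19_mem_V19plus_union_V19minus_iff.1 hξ).2

lemma S19_subset_image {s : Set V3} {t : ℝ} (hs : ∀ a ∈ Ioo (-1 : ℝ) 1, ![0, a, t] ∈ s) :
    S19 ⊆ y19 '' s := by
  rintro ξ ⟨h0, h1, h2⟩
  refine ⟨![0, ξ 1, t], hs _ h1, ?_⟩
  ext i
  fin_cases i <;> simp [h0, h2]

lemma image_y19 : y19 '' Ω19 = V19plus ∪ S19 ∪ V19minus := by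
  rw [union_right_comm]
  refine Subset.antisymm ?_ (union_subset V19plus_union_V19minus_subset_image
    (S19_subset_image (t := 0) fun a ha => by simpa [mem_Ω19_iff, abs_lt] using ha))
  rintro _ ⟨x, hx, rfl⟩
  by_cases h0 : x 0 = 0
  · exact Or.inr ⟨h0, hx 1, by simp [h0]⟩
  · exact Or.inl (y19_mem_V19plus_union_V19minus_iff.2 ⟨h0, hx⟩)

lemma preimage_image_y19_of_axis : (fun t : ℝ => ![0, 0, t]) ⁻¹' (y19 '' Ω19) = {0} := by
  ext t
  simp only [image_y19, mem_preimage, mem_union, mem_singleton_iff]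
  constructor
  · rintro ((h | h) | h)
    · exact absurd h.1 (by simp)
    · simpa using h.2.2
    · exact absurd h.2.1 (by simp)
  · rintro rfl
    exact Or.inl (Or.inr ⟨rfl, by norm_num, rfl⟩)

lemma not_isOpen_image_y19 : ¬IsOpen (y19 '' Ω19) := fun h => by
  have := h.preimage (show Continuous fun t : ℝ => ![0, 0, t] by fun_prop)
  rw [preimage_image_y19_of_axis] at this
  exact not_isOpen_singleton 0 this

lemma disjoint_image_frontier_y19 : Disjoint (V19plus ∪ V19minus) (y19 '' frontier Ω19) := by
  refine disjoint_left.2 ?_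
  rintro _ hξ ⟨x, hx, rfl⟩
  exact disjoint_left.1 (disjoint_frontier_iff_isOpen.2 isOpen_Ω19) hx
    (y19_mem_V19plus_union_V19minus_iff.1 hξ).2

lemma defConfig_y19 : defConfig y19 Ω19 = V19plus ∪ V19minus := by
  have hS : S19 ⊆ y19 '' frontier Ω19 := S19_subset_image (t := 1) fun a ha => by
    rw [frontier, isOpen_Ω19.interior_eq, closure_Ω19, Set.mem_sdiff, mem_Ω19_iff]
    refine ⟨fun i => ?_, by simp⟩
    fin_cases i <;> simp [ha.1.le, ha.2.le]
  rw [defConfig, image_y19, union_right_comm, union_sdiff_distrib, sdiff_eq_empty.2 hS,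
    union_empty, disjoint_image_frontier_y19.sdiff_eq_left]

lemma isOpen_V19plus_union_V19minus : IsOpen (V19plus ∪ V19minus) := by
  rw [show V19plus ∪ V19minus = {ξ | ξ 0 ≠ 0 ∧ |ξ 0| < 1 ∧ |ξ 1| < 1 ∧ |ξ 2| < |ξ 0|} from
    Set.ext fun _ => mem_V19plus_union_V19minus_iff]
  refine (isOpen_ne_fun ?_ ?_).and <| (isOpen_lt ?_ ?_).and <| (isOpen_lt ?_ ?_).and
    (isOpen_lt ?_ ?_) <;> fun_prop

lemma not_isPreconnected_V19plus_union_V19minus : ¬IsPreconnected (V19plus ∪ V19minus) := by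
  intro h
  have hplus : (![1 / 2, 0, 0] : V3) ∈ V19plus := by norm_num [V19plus, Matrix.cons_val_two]
  have hminus : (![-1 / 2, 0, 0] : V3) ∈ V19minus := by norm_num [V19minus, Matrix.cons_val_two]
  have hsub := h.subset_left_of_subset_union (u := {ξ : V3 | 0 < ξ 0})
    (v := {ξ : V3 | ξ 0 < 0})
    (isOpen_lt continuous_const (by fun_prop)) (isOpen_lt (by fun_prop) continuous_const)
    (disjoint_left.2 fun ξ (hu : 0 < ξ 0) (hv : ξ 0 < 0) => hu.not_gt hv)
    (union_subset (fun ξ hξ => Or.inl hξ.1) fun ξ hξ => Or.inr hξ.2.1)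
    ⟨_, Or.inl hplus, hplus.1⟩
  exact (hsub (Or.inr hminus)).not_gt hminus.2.1

/-- Ball's example.
For `Ω = (−1,1)³`, `P = {0}×(−1,1)²` and `y(x) = (x₁,x₂,|x₁|x₃)`: `y ∈ W^{1,∞}(Ω;ℝ³)`
(Lipschitz), `det ∇y = |x₁| > 0` on `Ω \ P`, `y` is injective on `Ω \ P`,
`y(Ω) = V⁺ ∪ S ∪ V⁻` is not open, and `Ω^y = y(Ω) \ y(∂Ω) = V⁺ ∪ V⁻` is open and
disconnected. -/
theorem ball_example :
    (∃ Kl : NNReal, LipschitzOnWith Kl y19 Ω19) ∧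
    (∀ x ∈ Ω19 \ P19, DifferentiableAt ℝ y19 x ∧ detG y19 x = |x 0| ∧ 0 < detG y19 x) ∧
    Set.InjOn y19 (Ω19 \ P19) ∧
    y19 '' Ω19 = V19plus ∪ S19 ∪ V19minus ∧
    ¬ IsOpen (y19 '' Ω19) ∧
    defConfig y19 Ω19 = V19plus ∪ V19minus ∧
    IsOpen (V19plus ∪ V19minus) ∧
    ¬ IsConnected (V19plus ∪ V19minus) := by
  refine ⟨⟨2, lipschitzOnWith_y19⟩, fun x hx => ?_, injOn_y19.mono Ω19_diff_P19_subset,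
    image_y19, not_isOpen_image_y19, defConfig_y19, isOpen_V19plus_union_V19minus,
    mt IsConnected.isPreconnected not_isPreconnected_V19plus_union_V19minus⟩
  have hx0 : x 0 ≠ 0 := Ω19_diff_P19_subset hx
  exact ⟨(hasFDerivAt_y19 hx0).differentiableAt, detG_y19 hx0, detG_y19 hx0 ▸ abs_pos.2 hx0⟩
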